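/- For every n ≥ 1, the graph B_n contains no semi-induced half-graph of height 4. -/
import Mathlib


/-- Vertex set of `B_n`: the `u_i`'s, the `w_j`'s, the subdivision vertices `x_{i,j}` and
`y_{i,j}`. -/
abbrev BnV (n : ℕ) : Type := (Fin n ⊕ Fin n) ⊕ ((Fin n × Fin n) ⊕ (Fin n × Fin n))

/-- The edges of `B_n`: exactly `u_i w_j`, `u_i x_{i,j}`, `x_{i,j} y_{i,j}` and
`y_{i,j} w_j` for all `i, j`. -/
def BnRel (n : ℕ) : BnV n → BnV n → Prop
  | Sum.inl (Sum.inl _), Sum.inl (Sum.inr _) => True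
  | Sum.inl (Sum.inl i), Sum.inr (Sum.inl p) => p.1 = i
  | Sum.inr (Sum.inl p), Sum.inr (Sum.inr q) => p = q
  | Sum.inr (Sum.inr p), Sum.inl (Sum.inr j) => p.2 = j
  | _, _ => False

/-- The graph `B_n`: obtained from `K_{n,n}` by subdividing every edge twice and adding
back the original edges. -/
def BnGraph (n : ℕ) : SimpleGraph (BnV n) := SimpleGraph.fromRel (BnRel n)

/-- `G` contains a semi-induced half-graph of height `t`: `2t` pairwise distinct vertices
`a_1, …, a_t, b_1, …, b_t` with `a_i` adjacent to `b_j` iff `i ≤ j` (adjacencies among the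
`a_i`'s and among the `b_j`'s are unconstrained). -/
def HasSemiInducedHalfGraph {V : Type*} (G : SimpleGraph V) (t : ℕ) : Prop :=
  ∃ a b : Fin t → V,
    Function.Injective (Sum.elim a b) ∧
    ∀ i j : Fin t, G.Adj (a i) (b j) ↔ i ≤ j

lemma adj_U {n : ℕ} {v : BnV n} {i : Fin n} (h : (BnGraph n).Adj v (Sum.inl (Sum.inl i))) :
    (∃ j, v = Sum.inl (Sum.inr j)) ∨ (∃ j, v = Sum.inr (Sum.inl (i, j))) := by
  rcases v with (i'|j')|(p|p) <;>
    simp only [BnGraph, SimpleGraph.fromRel_adj, BnRel] at h <;> simp_all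
  exact ⟨p.2, by rcases p with ⟨p1,p2⟩; simp_all⟩

lemma adj_W {n : ℕ} {v : BnV n} {j : Fin n} (h : (BnGraph n).Adj v (Sum.inl (Sum.inr j))) :
    (∃ i, v = Sum.inl (Sum.inl i)) ∨ (∃ i, v = Sum.inr (Sum.inr (i, j))) := by
  rcases v with (i'|j')|(p|p) <;>
    simp only [BnGraph, SimpleGraph.fromRel_adj, BnRel] at h <;> simp_all
  exact ⟨p.1, by rcases p with ⟨p1,p2⟩; simp_all⟩

lemma adj_X {n : ℕ} {v : BnV n} {p : Fin n × Fin n}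
    (h : (BnGraph n).Adj v (Sum.inr (Sum.inl p))) :
    v = Sum.inl (Sum.inl p.1) ∨ v = Sum.inr (Sum.inr p) := by
  rcases v with (i'|j')|(q|q) <;>
    simp only [BnGraph, SimpleGraph.fromRel_adj, BnRel] at h <;> simp_all

lemma adj_Y {n : ℕ} {v : BnV n} {p : Fin n × Fin n}
    (h : (BnGraph n).Adj v (Sum.inr (Sum.inr p))) :
    v = Sum.inr (Sum.inl p) ∨ v = Sum.inl (Sum.inr p.2) := by
  rcases v with (i'|j')|(q|q) <;>
    simp only [BnGraph, SimpleGraph.fromRel_adj, BnRel] at h <;> simp_all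

lemma adj_UW {n : ℕ} (i j : Fin n) :
    (BnGraph n).Adj (Sum.inl (Sum.inl i)) (Sum.inl (Sum.inr j)) := by
  simp [BnGraph, SimpleGraph.fromRel_adj, BnRel]

lemma twoU {n : ℕ} {v : BnV n} {i i' : Fin n} (h : (BnGraph n).Adj v (Sum.inl (Sum.inl i)))
    (h' : (BnGraph n).Adj v (Sum.inl (Sum.inl i'))) (hne : i ≠ i') :
    ∃ j, v = Sum.inl (Sum.inr j) := by
  rcases adj_U h with ⟨j, rfl⟩ | ⟨j, rfl⟩
  · exact ⟨j, rfl⟩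
  · rcases adj_U h' with ⟨j', hj⟩ | ⟨j', hj⟩ <;> simp_all

lemma twoW {n : ℕ} {v : BnV n} {j j' : Fin n} (h : (BnGraph n).Adj v (Sum.inl (Sum.inr j)))
    (h' : (BnGraph n).Adj v (Sum.inl (Sum.inr j'))) (hne : j ≠ j') :
    ∃ i, v = Sum.inl (Sum.inl i) := by
  rcases adj_W h with ⟨i, rfl⟩ | ⟨i, rfl⟩
  · exact ⟨i, rfl⟩
  · rcases adj_W h' with ⟨i', hi⟩ | ⟨i', hi⟩ <;> simp_all

lemma no_UW {n : ℕ} {v : BnV n} {i j : Fin n} (h : (BnGraph n).Adj v (Sum.inl (Sum.inl i)))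
    (h' : (BnGraph n).Adj v (Sum.inl (Sum.inr j))) : False := by
  rcases adj_U h with ⟨k, rfl⟩ | ⟨k, rfl⟩ <;> rcases adj_W h' with ⟨l, hl⟩ | ⟨l, hl⟩ <;>
    simp_all

lemma three_nbrs {n : ℕ} {v z1 z2 z3 : BnV n} (h1 : (BnGraph n).Adj z1 v)
    (h2 : (BnGraph n).Adj z2 v) (h3 : (BnGraph n).Adj z3 v)
    (d12 : z1 ≠ z2) (d13 : z1 ≠ z3) (d23 : z2 ≠ z3) : ∃ c, v = Sum.inl c := by
  rcases v with (i|j)|(p|p)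
  · exact ⟨_, rfl⟩
  · exact ⟨_, rfl⟩
  · rcases adj_X h1 with rfl|rfl <;> rcases adj_X h2 with h|h <;>
      rcases adj_X h3 with h'|h' <;> simp_all
  · rcases adj_Y h1 with rfl|rfl <;> rcases adj_Y h2 with h|h <;>
      rcases adj_Y h3 with h'|h' <;> simp_all

/-- for every `n ≥ 1`, `B_n` contains no semi-induced half-graph of height 4. -/
theorem stmt9 (n : ℕ) (hn : 1 ≤ n) : ¬ HasSemiInducedHalfGraph (BnGraph n) 4 := by
  rintro ⟨a, b, hinj, hadj⟩
  have hab : ∀ i j : Fin 4, a i ≠ b j := fun i j h => by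
    simpa using hinj (show Sum.elim a b (.inl i) = Sum.elim a b (.inr j) from h)
  have haa : ∀ i j : Fin 4, i ≠ j → a i ≠ a j := fun i j hij h => by
    exact hij (by simpa using hinj (show Sum.elim a b (.inl i) = Sum.elim a b (.inl j) from h))
  have hbb : ∀ i j : Fin 4, i ≠ j → b i ≠ b j := fun i j hij h => by
    exact hij (by simpa using hinj (show Sum.elim a b (.inr i) = Sum.elim a b (.inr j) from h))
  have h02 : (BnGraph n).Adj (a 0) (b 2) := (hadj 0 2).2 (by decide)
  have h12 : (BnGraph n).Adj (a 1) (b 2) := (hadj 1 2).2 (by decide)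
  have h22 : (BnGraph n).Adj (a 2) (b 2) := (hadj 2 2).2 (by decide)
  have h03 : (BnGraph n).Adj (a 0) (b 3) := (hadj 0 3).2 (by decide)
  have h13 : (BnGraph n).Adj (a 1) (b 3) := (hadj 1 3).2 (by decide)
  have h23 : (BnGraph n).Adj (a 2) (b 3) := (hadj 2 3).2 (by decide)
  have h01 : (BnGraph n).Adj (a 0) (b 1) := (hadj 0 1).2 (by decide)
  have h11 : (BnGraph n).Adj (a 1) (b 1) := (hadj 1 1).2 (by decide)
  have h21 : ¬ (BnGraph n).Adj (a 2) (b 1) := fun h => by simpa using (hadj 2 1).1 h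
  have d01 : a 0 ≠ a 1 := haa 0 1 (by decide)
  have d02 : a 0 ≠ a 2 := haa 0 2 (by decide)
  have d12 : a 1 ≠ a 2 := haa 1 2 (by decide)
  obtain ⟨c2, hc2⟩ := three_nbrs h02 h12 h22 d01 d02 d12
  obtain ⟨c3, hc3⟩ := three_nbrs h03 h13 h23 d01 d02 d12
  have hcc : c2 ≠ c3 := fun h => hbb 2 3 (by decide) (by rw [hc2, hc3, h])
  rw [hc2] at h02 h12 h22
  rw [hc3] at h03 h13 h23
  rcases c2 with i2 | j2 <;> rcases c3 with i3 | j3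
  · -- both U
    have hne : i2 ≠ i3 := fun h => hcc (by rw [h])
    obtain ⟨j0, hj0⟩ := twoU h02 h03 hne
    obtain ⟨j1, hj1⟩ := twoU h12 h13 hne
    obtain ⟨jj, hjj⟩ := twoU h22 h23 hne
    have hjne : j0 ≠ j1 := fun h => d01 (by rw [hj0, hj1, h])
    rw [hj0] at h01; rw [hj1] at h11
    obtain ⟨i1, hi1⟩ := twoW h01.symm h11.symm hjne
    exact h21 (by rw [hjj, hi1]; exact (adj_UW i1 jj).symm)
  · -- U and W : a2 adjacent to both
    exact no_UW h22 h23
  · exact no_UW h23 h22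
  · -- both W
    have hne : j2 ≠ j3 := fun h => hcc (by rw [h])
    obtain ⟨i0, hi0⟩ := twoW h02 h03 hne
    obtain ⟨i1, hi1⟩ := twoW h12 h13 hne
    obtain ⟨ii, hii⟩ := twoW h22 h23 hne
    have hine : i0 ≠ i1 := fun h => d01 (by rw [hi0, hi1, h])
    rw [hi0] at h01; rw [hi1] at h11
    obtain ⟨j1, hj1⟩ := twoU h01.symm h11.symm hine
    exact h21 (by rw [hii, hj1]; exact adj_UW ii j1)
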